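/- Let H be a commutative bialgebra and A a commutative right H-comodule algebra. For each invertible element a ∈ A, the element d(a) = a^{-1} a_{[0]} ⊗ a_{[1]} ∈ A ⊗ H is an invertible grouplike element of the coring A⊗H, with inverse a (a^{-1})_{[0]} ⊗ (a^{-1})_{[1]}. Moreover, d : G_m(A) → G^i(A⊗H) is a group homomorphism. -/

import Mathlib

open TensorProduct

universe u

/-- A commutative right `H`-comodule algebra: a commutative `k`-algebra `A` together with
a coassociative counital coaction `ρ : A → A ⊗ H` which is an algebra map. -/
structure ComodAlg (k H A : Type u) [CommRing k] [Ring H] [Bialgebra k H]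
    [CommRing A] [Algebra k A] : Type u where
  ρ : A →ₐ[k] A ⊗[k] H
  counit_comp : ∀ a : A,
    (TensorProduct.rid k A) ((LinearMap.lTensor A (Coalgebra.counit (R := k) (A := H))) (ρ a)) = a
  coassoc : ∀ a : A,
    (LinearMap.lTensor A (Coalgebra.comul (R := k) (A := H))) (ρ a)
      = (TensorProduct.assoc k A H H) ((LinearMap.rTensor H ρ.toLinearMap) (ρ a))

namespace ComodAlg

variable {k H A : Type u} [CommRing k] [Ring H] [Bialgebra k H]
  [CommRing A] [Algebra k A] (c : ComodAlg k H A)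

/-- The subset of coinvariant elements `B = A^{co H}`. -/
def coinvSet : Set A := {a : A | c.ρ a = a ⊗ₜ[k] 1}

/-- The coinvariants `B = A^{co H}` as a subalgebra of `A`. -/
def coinvAlg : Subalgebra k A where
  carrier := c.coinvSet
  mul_mem' {a} {b} ha hb := by
    simp only [coinvSet, Set.mem_setOf_eq] at *
    rw [map_mul, ha, hb, Algebra.TensorProduct.tmul_mul_tmul, mul_one]
  add_mem' {a} {b} ha hb := by
    simp only [coinvSet, Set.mem_setOf_eq] at *
    rw [map_add, ha, hb, ← add_tmul]
  algebraMap_mem' r := by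
    simp only [coinvSet, Set.mem_setOf_eq, AlgHom.commutes,
      Algebra.TensorProduct.algebraMap_apply]

end ComodAlg

namespace ComodAlg

variable {k H A : Type u} [CommRing k] [CommRing H] [Bialgebra k H]
  [CommRing A] [Algebra k A] (c : ComodAlg k H A)

/-- `Σ aᵢ ⊗ (hᵢ)₍₁₎ ⊗ (hᵢ)₍₂₎`, the comultiplication of the coring `A ⊗ H` applied to `x`,
written in `(A ⊗ H) ⊗ H` via the canonical identification `(A ⊗ H) ⊗_A (A ⊗ H) ≅ A ⊗ H ⊗ H`. -/
noncomputable def coact2 : A ⊗[k] H →ₗ[k] (A ⊗[k] H) ⊗[k] H :=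
  (TensorProduct.assoc k A H H).symm.toLinearMap ∘ₗ
    LinearMap.lTensor A (Coalgebra.comul (R := k) (A := H))

/-- `Σ_{i,j} aᵢ (a_j)₍₀₎ ⊗ hᵢ (a_j)₍₁₎ ⊗ h_j`, the image of `x ⊗_A x` under the canonical
identification `(A ⊗ H) ⊗_A (A ⊗ H) ≅ A ⊗ H ⊗ H`. -/
noncomputable def sqRHS (x : A ⊗[k] H) : (A ⊗[k] H) ⊗[k] H :=
  (LinearMap.rTensor H (LinearMap.mulLeft k x)) ((LinearMap.rTensor H c.ρ.toLinearMap) x)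

/-- `x` is a grouplike element of the `A`-coring `A ⊗ H`; equivalently, `x` is a
normalized Harrison 1-cocycle. -/
noncomputable def IsGrouplike (x : A ⊗[k] H) : Prop :=
  coact2 x = c.sqRHS x ∧
    (TensorProduct.rid k A) ((LinearMap.lTensor A (Coalgebra.counit (R := k) (A := H))) x) = 1

/-- The map `d : 𝔾ₘ(A) → Gⁱ(A ⊗ H)`, `d(a) = a⁻¹ a₍₀₎ ⊗ a₍₁₎`. -/
noncomputable def d (a : Aˣ) : A ⊗[k] H := (((↑a⁻¹ : A) ⊗ₜ[k] (1 : H)) : A ⊗[k] H) * c.ρ ↑a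

end ComodAlg


section Helpers
variable {k H A : Type u} [CommRing k] [CommRing H] [Bialgebra k H] [CommRing A] [Algebra k A]

lemma lTensor_comul_eq : (LinearMap.lTensor A (Coalgebra.comul (R := k) (A := H)))
    = (Algebra.TensorProduct.map (AlgHom.id k A) (Bialgebra.comulAlgHom k H)).toLinearMap := by
  apply TensorProduct.ext'; intro a h; simp

lemma lTensor_counit_eq : (LinearMap.lTensor A (Coalgebra.counit (R := k) (A := H)))
    = (Algebra.TensorProduct.map (AlgHom.id k A) (Bialgebra.counitAlgHom k H)).toLinearMap := by
  apply TensorProduct.ext'; intro a h; simp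

lemma rid_eq : (TensorProduct.rid k A).toLinearMap
    = (Algebra.TensorProduct.rid k k A).toLinearMap := by
  apply TensorProduct.ext'; intro a r; simp

lemma assoc_symm_mul (u v : A ⊗[k] (H ⊗[k] H)) :
    (TensorProduct.assoc k A H H).symm (u * v)
      = (TensorProduct.assoc k A H H).symm u * (TensorProduct.assoc k A H H).symm v :=
  map_mul (Algebra.TensorProduct.assoc k k k A H H).symm u v

lemma rTensor_rho_eq (c : ComodAlg k H A) : (LinearMap.rTensor H c.ρ.toLinearMap)
    = (Algebra.TensorProduct.map c.ρ (AlgHom.id k H)).toLinearMap := by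
  apply TensorProduct.ext'; intro a h; simp

lemma rTensor_mulLeft_eq (x : A ⊗[k] H) (y : (A ⊗[k] H) ⊗[k] H) :
    (LinearMap.rTensor H (LinearMap.mulLeft k x)) y = (x ⊗ₜ[k] (1 : H)) * y := by
  induction y using TensorProduct.induction_on with
  | zero => simp
  | tmul u h => simp [Algebra.TensorProduct.tmul_mul_tmul]
  | add u v hu hv => simp [mul_add, hu, hv]

lemma lTensor_comul_mul (x y : A ⊗[k] H) :
    (LinearMap.lTensor A (Coalgebra.comul (R := k) (A := H))) (x * y)
      = (LinearMap.lTensor A (Coalgebra.comul (R := k) (A := H))) x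
        * (LinearMap.lTensor A (Coalgebra.comul (R := k) (A := H))) y := by
  rw [lTensor_comul_eq]
  exact (Algebra.TensorProduct.map (AlgHom.id k A) (Bialgebra.comulAlgHom k H)).map_mul x y

lemma lTensor_counit_mul (x y : A ⊗[k] H) :
    (LinearMap.lTensor A (Coalgebra.counit (R := k) (A := H))) (x * y)
      = (LinearMap.lTensor A (Coalgebra.counit (R := k) (A := H))) x
        * (LinearMap.lTensor A (Coalgebra.counit (R := k) (A := H))) y := by
  rw [lTensor_counit_eq]
  exact (Algebra.TensorProduct.map (AlgHom.id k A) (Bialgebra.counitAlgHom k H)).map_mul x y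

lemma rid_mul (x y : A ⊗[k] k) :
    (TensorProduct.rid k A) (x * y) = (TensorProduct.rid k A) x * (TensorProduct.rid k A) y := by
  have h : (TensorProduct.rid k A : A ⊗[k] k → A) x = (Algebra.TensorProduct.rid k k A) x :=
    congrFun (congrArg (fun f => (DFunLike.coe f : A ⊗[k] k → A)) rid_eq) x
  have h' := congrFun (congrArg (fun f => (DFunLike.coe f : A ⊗[k] k → A)) (rid_eq (k := k) (A := A)))
  simp only [LinearEquiv.coe_coe, AlgEquiv.toLinearMap_apply] at h'
  rw [h' x, h' y, h' (x*y), map_mul]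

lemma rTensor_rho_mul (c : ComodAlg k H A) (x y : A ⊗[k] H) :
    (LinearMap.rTensor H c.ρ.toLinearMap) (x * y)
      = (LinearMap.rTensor H c.ρ.toLinearMap) x * (LinearMap.rTensor H c.ρ.toLinearMap) y := by
  rw [rTensor_rho_eq c]
  exact (Algebra.TensorProduct.map c.ρ (AlgHom.id k H)).map_mul x y

lemma rho_mul_rho_inv (c : ComodAlg k H A) (a : Aˣ) : c.ρ ↑a * c.ρ ↑a⁻¹ = 1 := by
  rw [← map_mul, Units.mul_inv, map_one]

end Helpers

/-- For every unit `a` of `A`, the element `d(a) = a⁻¹ a₍₀₎ ⊗ a₍₁₎` is an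
invertible grouplike element of the coring `A ⊗ H`, with inverse `a (a⁻¹)₍₀₎ ⊗ (a⁻¹)₍₁₎`;
moreover `d` is a group homomorphism from `𝔾ₘ(A)` to `Gⁱ(A ⊗ H)`. -/
theorem d_is_hom_to_invertible_grouplikes
    {k H A : Type u} [CommRing k] [CommRing H] [Bialgebra k H]
    [CommRing A] [Algebra k A] (c : ComodAlg k H A) :
    (∀ a : Aˣ, c.IsGrouplike (c.d a)) ∧
    (∀ a : Aˣ, c.d a * ((((↑a : A) ⊗ₜ[k] (1 : H)) : A ⊗[k] H) * c.ρ ↑a⁻¹) = 1 ∧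
      (((↑a : A) ⊗ₜ[k] (1 : H)) : A ⊗[k] H) * c.ρ ↑a⁻¹ = c.d a⁻¹) ∧
    (∀ a b : Aˣ, c.d (a * b) = c.d a * c.d b) := by
  refine ⟨?_, ?_, ?_⟩
  · intro a
    have hone : (LinearMap.lTensor A (Coalgebra.comul (R := k) (A := H)))
        ((↑a⁻¹ : A) ⊗ₜ[k] (1 : H)) = (↑a⁻¹ : A) ⊗ₜ[k] ((1 : H) ⊗ₜ[k] (1 : H)) := by
      rw [LinearMap.lTensor_tmul, Bialgebra.comul_one, Algebra.TensorProduct.one_def]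
    constructor
    · -- grouplike cocycle condition
      unfold ComodAlg.coact2 ComodAlg.sqRHS ComodAlg.d
      simp only [LinearMap.coe_comp, LinearEquiv.coe_coe, Function.comp_apply]
      rw [lTensor_comul_mul, hone, c.coassoc, assoc_symm_mul, LinearEquiv.symm_apply_apply,
        TensorProduct.assoc_symm_tmul]
      rw [rTensor_rho_mul, rTensor_mulLeft_eq]
      have h2 : (LinearMap.rTensor H c.ρ.toLinearMap) ((↑a⁻¹ : A) ⊗ₜ[k] (1 : H))
          = (c.ρ ↑a⁻¹) ⊗ₜ[k] (1 : H) := by rw [LinearMap.rTensor_tmul]; rfl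
      rw [h2, ← mul_assoc]
      congr 1
      rw [Algebra.TensorProduct.tmul_mul_tmul, one_mul, mul_assoc, rho_mul_rho_inv, mul_one]
    · -- counit condition
      unfold ComodAlg.d
      rw [lTensor_counit_mul, rid_mul, c.counit_comp, LinearMap.lTensor_tmul,
        Bialgebra.counit_one, TensorProduct.rid_tmul, one_smul, Units.inv_mul]
  · intro a
    constructor
    · unfold ComodAlg.d
      rw [mul_mul_mul_comm, rho_mul_rho_inv, mul_one, Algebra.TensorProduct.tmul_mul_tmul,
        Units.inv_mul, mul_one, ← Algebra.TensorProduct.one_def]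
    · unfold ComodAlg.d
      simp
  · intro a b
    unfold ComodAlg.d
    rw [Units.val_mul, map_mul, mul_inv_rev, Units.val_mul]
    have h3 : ((↑b⁻¹ * ↑a⁻¹ : A) ⊗ₜ[k] (1 : H))
        = ((↑a⁻¹ : A) ⊗ₜ[k] (1 : H)) * ((↑b⁻¹ : A) ⊗ₜ[k] (1 : H)) := by
      rw [Algebra.TensorProduct.tmul_mul_tmul, mul_one, mul_comm]
    rw [h3]
    ring
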